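/- For all t ≥ 0 and all x ∈ ℝ, the characteristic and the solution value along it satisfy |ξ(t,x) − x| ≤ t·|ū(x)| + (t²/8)·∫_ℝ ū_x(y)² dy and |ū(x) + ∫₀ᵗ φ(s,x) ds − ū(x)| = |∫₀ᵗ φ(s,x) ds| ≤ (t/4)·∫_ℝ ū_x(y)² dy; that is, |u(t, ξ(t,x)) − ū(x)| ≤ (t/4)·∥ū_x∥²_{L²}. -/

import Mathlib

open MeasureTheory

/-- `φ(t,y) = (1/4) ∫_{{ū_x > -2/t}} sign(y-x) ū_x(x)² dx` for `t ≠ 0`, and the full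
integral `φ(0,y) = (1/4) ∫_ℝ sign(y-x) ū_x(x)² dx` at `t = 0`. -/
noncomputable def phiHS (w : ℝ → ℝ) (t y : ℝ) : ℝ :=
  if t = 0 then (1 / 4) * ∫ x : ℝ, Real.sign (y - x) * (w x) ^ 2
  else (1 / 4) * ∫ x in {x : ℝ | w x > -2 / t}, Real.sign (y - x) * (w x) ^ 2

/-- The characteristic `ξ(t,y) = y + t ū(y) + ∫₀ᵗ (t-s) φ(s,y) ds`. -/
noncomputable def xiHS (u w : ℝ → ℝ) (t y : ℝ) : ℝ :=
  y + t * u y + ∫ s in (0 : ℝ)..t, (t - s) * phiHS w s y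

/-!
Since `|sign| ≤ 1` and shrinking the domain of integration of the nonnegative function `ū_x²`
can only decrease its integral, `|φ(s,x)| ≤ ‖ū_x‖²/4` uniformly in `s`, whatever the set
`{ū_x > -2/s}` is. Both bounds follow by integrating this against the weights `1` and `t - s`
over `[0, t]`, which contribute `t` and `t²/2`.
-/

lemma Real.abs_sign_le_one (r : ℝ) : |Real.sign r| ≤ 1 := by
  rcases Real.sign_apply_eq r with h | h | h <;> simp [h]

lemma abs_integral_mul_le_integral_of_le {α : Type*} [MeasurableSpace α] {μ ν : Measure α}
    (hμν : μ ≤ ν) {f g : α → ℝ} (hf : Integrable f ν) (hf0 : 0 ≤ f) (hg : ∀ x, |g x| ≤ 1) :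
    |∫ x, g x * f x ∂μ| ≤ ∫ x, f x ∂ν := by
  have hgf : ∀ x, ‖g x * f x‖ ≤ f x := fun x => by
    rw [Real.norm_eq_abs, abs_mul, abs_of_nonneg (hf0 x)]
    exact mul_le_of_le_one_left (hf0 x) (hg x)
  calc |∫ x, g x * f x ∂μ| ≤ ∫ x, f x ∂μ :=
        norm_integral_le_of_norm_le (hf.mono_measure hμν) (.of_forall hgf)
    _ ≤ ∫ x, f x ∂ν := integral_mono_measure hμν (.of_forall hf0) hf

lemma abs_phiHS_le {w : ℝ → ℝ} (hw : Integrable (fun x => w x ^ 2)) (t y : ℝ) :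
    |phiHS w t y| ≤ (1 / 4) * ∫ x, w x ^ 2 := by
  have hw0 : 0 ≤ fun x => w x ^ 2 := fun x => sq_nonneg (w x)
  have hsign : ∀ x, |Real.sign (y - x)| ≤ 1 := fun x => Real.abs_sign_le_one _
  unfold phiHS
  split_ifs <;> rw [abs_mul, abs_of_pos (by norm_num : (0 : ℝ) < 1 / 4)] <;> gcongr
  · exact abs_integral_mul_le_integral_of_le le_rfl hw hw0 hsign
  · exact abs_integral_mul_le_integral_of_le Measure.restrict_le_self hw hw0 hsign

lemma intervalIntegral_sub_mul_const (t M : ℝ) :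
    ∫ s in (0 : ℝ)..t, (t - s) * M = t ^ 2 / 2 * M := by
  rw [intervalIntegral.integral_mul_const, intervalIntegral.integral_sub intervalIntegrable_const
    intervalIntegral.intervalIntegrable_id, integral_id, intervalIntegral.integral_const]
  simp only [sub_zero, smul_eq_mul]
  ring

lemma abs_intervalIntegral_sub_mul_le {g : ℝ → ℝ} {t M : ℝ} (ht : 0 ≤ t)
    (hg : ∀ s ∈ Set.Ioc 0 t, |g s| ≤ M) :
    |∫ s in (0 : ℝ)..t, (t - s) * g s| ≤ t ^ 2 / 2 * M := by
  rcases ht.eq_or_lt with rfl | htpos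
  · simp
  have hM : 0 ≤ M := (abs_nonneg _).trans (hg t ⟨htpos, le_rfl⟩)
  have hbound : ∀ s ∈ Set.uIoc 0 t, ‖(t - s) * g s‖ ≤ (t - s) * M := fun s hs => by
    rw [Set.uIoc_of_le ht] at hs
    rw [Real.norm_eq_abs, abs_mul, abs_of_nonneg (sub_nonneg.2 hs.2)]
    exact mul_le_mul_of_nonneg_left (hg s hs) (sub_nonneg.2 hs.2)
  calc |∫ s in (0 : ℝ)..t, (t - s) * g s|
      ≤ |∫ s in (0 : ℝ)..t, (t - s) * M| :=
        intervalIntegral.norm_integral_le_abs_of_norm_le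
          ((ae_restrict_mem measurableSet_uIoc).mono hbound)
          (Continuous.intervalIntegrable (by fun_prop) _ _)
    _ = t ^ 2 / 2 * M := by rw [intervalIntegral_sub_mul_const, abs_of_nonneg (by positivity)]

theorem characteristic_displacement_bounds_general (ubar ubarx : ℝ → ℝ)
    (hL2 : MemLp ubarx 2 (volume : Measure ℝ)) :
    ∀ t : ℝ, 0 ≤ t → ∀ x : ℝ,
      |xiHS ubar ubarx t x - x| ≤
        t * |ubar x| + (t ^ 2 / 8) * (∫ y : ℝ, (ubarx y) ^ 2) ∧
      |∫ s in (0 : ℝ)..t, phiHS ubarx s x| ≤ (t / 4) * ∫ y : ℝ, (ubarx y) ^ 2 := by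
  intro t ht x
  have hphi : ∀ s, |phiHS ubarx s x| ≤ (1 / 4) * ∫ y, ubarx y ^ 2 :=
    fun s => abs_phiHS_le hL2.integrable_sq s x
  have hxi : xiHS ubar ubarx t x - x =
      t * ubar x + ∫ s in (0 : ℝ)..t, (t - s) * phiHS ubarx s x := by
    unfold xiHS
    ring
  constructor
  · calc |xiHS ubar ubarx t x - x|
        ≤ |t * ubar x| + |∫ s in (0 : ℝ)..t, (t - s) * phiHS ubarx s x| :=
          hxi ▸ abs_add_le _ _
      _ ≤ t * |ubar x| + t ^ 2 / 2 * ((1 / 4) * ∫ y, ubarx y ^ 2) := by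
          rw [abs_mul, abs_of_nonneg ht]
          gcongr
          exact abs_intervalIntegral_sub_mul_le ht fun s _ => hphi s
      _ = _ := by ring
  · calc |∫ s in (0 : ℝ)..t, phiHS ubarx s x|
        ≤ (1 / 4) * (∫ y, ubarx y ^ 2) * |t - 0| :=
          intervalIntegral.norm_integral_le_of_norm_le_const (f := fun s => phiHS ubarx s x)
            fun s _ => hphi s
      _ = _ := by
          rw [sub_zero, abs_of_nonneg ht]
          ring

/-- A priori bounds on characteristics and on the solution along them:
`|ξ(t,x) - x| ≤ t|ū(x)| + (t²/8)‖ū_x‖²_{L²}` and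
`|u(t,ξ(t,x)) - ū(x)| = |∫₀ᵗ φ(s,x) ds| ≤ (t/4)‖ū_x‖²_{L²}`. -/
theorem characteristic_displacement_bounds (ubar ubarx : ℝ → ℝ)
    (hAC : ∀ a b : ℝ, a ≤ b → ubar b - ubar a = ∫ x in a..b, ubarx x)
    (hL2 : MemLp ubarx 2 (volume : Measure ℝ)) :
    ∀ t : ℝ, 0 ≤ t → ∀ x : ℝ,
      |xiHS ubar ubarx t x - x| ≤
        t * |ubar x| + (t ^ 2 / 8) * (∫ y : ℝ, (ubarx y) ^ 2) ∧
      |∫ s in (0 : ℝ)..t, phiHS ubarx s x| ≤ (t / 4) * ∫ y : ℝ, (ubarx y) ^ 2 :=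
  characteristic_displacement_bounds_general ubar ubarx hL2
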